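/- The join operator ⊔ on the symbolic lattice L is associative: for all l₁, l₂, l₃ ∈ L, (l₁ ⊔ l₂) ⊔ l₃ = l₁ ⊔ (l₂ ⊔ l₃). -/

import Mathlib

inductive SymExpr (P U B F : Type*) where
  | bot : SymExpr P U B F
  | top : SymExpr P U B F
  | prim : P → SymExpr P U B F
  | unop : U → SymExpr P U B F → SymExpr P U B F
  | binop : B → SymExpr P U B F → SymExpr P U B F → SymExpr P U B F
  | fn : F → List (SymExpr P U B F) → SymExpr P U B F
  | phi : List (SymExpr P U B F) → SymExpr P U B F

namespace SymExpr

variable {P U B F : Type*}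

/-- The partial order `⊑` on the symbolic lattice. -/
inductive Le : SymExpr P U B F → SymExpr P U B F → Prop where
  | bot (l) : Le .bot l
  | top (l) : Le l .top
  | prim (p : P) : Le (.prim p) (.prim p)
  | unop {l l'} (u : U) : Le l l' → Le (.unop u l) (.unop u l')
  | binop {l₁ l₂ l₁' l₂'} (b : B) : Le l₁ l₁' → Le l₂ l₂' →
      Le (.binop b l₁ l₂) (.binop b l₁' l₂')
  | fn {ls ls'} (f : F) : List.Forall₂ Le ls ls' → Le (.fn f ls) (.fn f ls')
  | phi {ls ls'} : List.Forall₂ Le ls ls' → Le (.phi ls) (.phi ls')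

attribute [local instance] Classical.propDecidable

mutual
noncomputable def join : SymExpr P U B F → SymExpr P U B F → SymExpr P U B F
  | .bot, l => l
  | l, .bot => l
  | .prim p, .prim p' => if p = p' then .prim p else .top
  | .unop u l, .unop u' l' => if u = u' then .unop u (join l l') else .top
  | .binop b l₁ l₂, .binop b' l₁' l₂' =>
      if b = b' then .binop b (join l₁ l₁') (join l₂ l₂') else .top
  | .fn f ls, .fn f' ls' =>
      if f = f' ∧ ls.length = ls'.length then .fn f (joinList ls ls') else .top
  | .phi ls, .phi ls' =>
      if ls.length = ls'.length then .phi (joinList ls ls') else .top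
  | _, _ => .top

noncomputable def joinList : List (SymExpr P U B F) → List (SymExpr P U B F) → List (SymExpr P U B F)
  | l :: ls, l' :: ls' => join l l' :: joinList ls ls'
  | _, _ => []
end

mutual
noncomputable def meet : SymExpr P U B F → SymExpr P U B F → SymExpr P U B F
  | .top, l => l
  | l, .top => l
  | .prim p, .prim p' => if p = p' then .prim p else .bot
  | .unop u l, .unop u' l' => if u = u' then .unop u (meet l l') else .bot
  | .binop b l₁ l₂, .binop b' l₁' l₂' =>
      if b = b' then .binop b (meet l₁ l₁') (meet l₂ l₂') else .bot
  | .fn f ls, .fn f' ls' =>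
      if f = f' ∧ ls.length = ls'.length then .fn f (meetList ls ls') else .bot
  | .phi ls, .phi ls' =>
      if ls.length = ls'.length then .phi (meetList ls ls') else .bot
  | _, _ => .bot

noncomputable def meetList : List (SymExpr P U B F) → List (SymExpr P U B F) → List (SymExpr P U B F)
  | l :: ls, l' :: ls' => meet l l' :: meetList ls ls'
  | _, _ => []
end

mutual
def depth : SymExpr P U B F → ℕ
  | .bot => 0
  | .top => 0
  | .prim _ => 0
  | .unop _ l => 1 + depth l
  | .binop _ l₁ l₂ => 1 + max (depth l₁) (depth l₂)
  | .fn _ ls => 1 + depthList ls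
  | .phi ls => 1 + depthList ls

def depthList : List (SymExpr P U B F) → ℕ
  | [] => 0
  | l :: ls => max (depth l) (depthList ls)
end

/-- The widening truncation `T_i`. -/
def trunc : ℕ → SymExpr P U B F → SymExpr P U B F
  | _, .bot => .bot
  | _, .top => .top
  | _, .prim p => .prim p
  | 0, .unop _ _ => .top
  | 0, .binop _ _ _ => .top
  | 0, .fn _ _ => .top
  | 0, .phi _ => .top
  | i + 1, .unop u l => .unop u (trunc i l)
  | i + 1, .binop b l₁ l₂ => .binop b (trunc i l₁) (trunc i l₂)
  | i + 1, .fn f ls => .fn f (ls.map (fun l => trunc i l))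
  | i + 1, .phi ls => .phi (ls.map (fun l => trunc i l))

end SymExpr

/-! Induction on `l₁`. If `l₁`, `l₂`, `l₃` have the same head constructor, symbol and arity, both
sides are that constructor applied to componentwise joins, which associate by induction; since
`joinList` truncates to the shorter list, the arity tests on the two sides agree. Otherwise both
sides are `⊤`. -/

namespace SymExpr

variable {P U B F : Type*}

@[simp]
lemma length_joinList (ls ls' : List (SymExpr P U B F)) :
    (joinList ls ls').length = min ls.length ls'.length := by
  induction ls generalizing ls' with
  | nil => cases ls' <;> simp [joinList]
  | cons a as ih => cases ls' <;> simp [joinList, ih]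

lemma joinList_assoc {ls₁ ls₂ ls₃ : List (SymExpr P U B F)}
    (h : ∀ a ∈ ls₁, ∀ b ∈ ls₂, ∀ c ∈ ls₃, (a.join b).join c = a.join (b.join c)) :
    joinList (joinList ls₁ ls₂) ls₃ = joinList ls₁ (joinList ls₂ ls₃) := by
  induction ls₁ generalizing ls₂ ls₃ with
  | nil => simp [joinList]
  | cons a as ih =>
    match ls₂, ls₃ with
    | [], _ | _ :: _, [] => simp [joinList]
    | b :: bs, c :: cs =>
      simp only [joinList, List.cons.injEq]
      exact ⟨h a (by simp) b (by simp) c (by simp), ih fun x hx y hy z hz =>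
        h x (by simp [hx]) y (by simp [hy]) z (by simp [hz])⟩

end SymExpr

/-- the join is associative. -/
theorem SymExpr.join_assoc {P U B F : Type*} (l₁ l₂ l₃ : SymExpr P U B F) :
    (l₁.join l₂).join l₃ = l₁.join (l₂.join l₃) := by
  cases l₁ <;> cases l₂ <;> cases l₃
  case unop.unop.unop _ x₁ _ x₂ _ x₃ =>
    have ih := join_assoc x₁ x₂ x₃
    simp only [join]; split_ifs <;> simp_all [join]
  case binop.binop.binop _ x₁ y₁ _ x₂ y₂ _ x₃ y₃ =>
    have ihx := join_assoc x₁ x₂ x₃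
    have ihy := join_assoc y₁ y₂ y₃
    simp only [join]; split_ifs <;> simp_all [join]
  case fn.fn.fn _ ls₁ _ ls₂ _ ls₃ =>
    have ih := joinList_assoc fun a (_ : a ∈ ls₁) b (_ : b ∈ ls₂) c (_ : c ∈ ls₃) =>
      join_assoc a b c
    simp only [join]; split_ifs <;> simp_all [join]
  case phi.phi.phi ls₁ ls₂ ls₃ =>
    have ih := joinList_assoc fun a (_ : a ∈ ls₁) b (_ : b ∈ ls₂) c (_ : c ∈ ls₃) =>
      join_assoc a b c
    simp only [join]; split_ifs <;> simp_all [join]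
  all_goals simp [join]; try split_ifs <;> simp_all [join]
termination_by l₁
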